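/- Let εX, εY ∈ (−1, 1) with εY < εX. Then the characteristic polynomial of the matrix A_{C2} has three real roots λ₁, λ₂, λ₃ satisfying λ₁ > 0, −1 < λ₂ < 0 and λ₃ < −1. -/
import Mathlib


open Matrix Polynomial

/-- The matrix `A_{C2}` governing the dynamics along the cycle `C₂` in logarithmic
coordinates. -/
noncomputable def AC2 (εX εY : ℝ) : Matrix (Fin 3) (Fin 3) ℝ :=
  !![0, 2/(1-εY), (1+εX)/(1-εY);
     1, -2/(1+εX) - 2*(1-εX)/((1+εX)*(1-εY)), -(1-εX)/(1-εY);
     0, (1-εY)/(1+εX) + 2*(1+εY)/((1+εX)*(1-εY)), (1+εY)/(1-εY)]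

set_option maxHeartbeats 2000000 in
theorem stmt16 (εX εY : ℝ) (hX : εX ∈ Set.Ioo (-1:ℝ) 1) (hY : εY ∈ Set.Ioo (-1:ℝ) 1)
    (hlt : εY < εX) :
    ∃ l₁ l₂ l₃ : ℝ,
      (AC2 εX εY).charpoly = (X - C l₁) * (X - C l₂) * (X - C l₃) ∧
      0 < l₁ ∧ -1 < l₂ ∧ l₂ < 0 ∧ l₃ < -1 := by
  obtain ⟨hX1, hX2⟩ := hX
  obtain ⟨hY1, hY2⟩ := hY
  have ha : (0:ℝ) < 1 + εX := by linarith
  have hb : (0:ℝ) < 1 - εY := by linarith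
  have ha' : (1:ℝ) + εX ≠ 0 := ne_of_gt ha
  have hb' : (1:ℝ) - εY ≠ 0 := ne_of_gt hb
  have hab : (0:ℝ) < (1+εX)*(1-εY) := mul_pos ha hb
  set s : ℝ := (3 - 3*(εX+εY) - εX*εY)/((1+εX)*(1-εY)) with hs
  set t : ℝ := (3 + 3*(εX+εY) - εX*εY)/((1+εX)*(1-εY)) with ht
  set g : ℝ → ℝ := fun x => x^3 + s*x^2 - t*x - 1 with hg
  -- eval of the charpoly
  have hp_eval : ∀ x : ℝ, Polynomial.eval x ((AC2 εX εY).charpoly) = g x := by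
    intro x
    rw [Matrix.charpoly, Matrix.det_fin_three]
    simp [charmatrix_apply, Matrix.diagonal_apply, AC2, hg, hs, ht]
    field_simp
    ring
  -- continuity
  have hgc : Continuous g := by fun_prop
  -- values of g
  have hg0 : g 0 = -1 := by simp [hg]
  have hgm1 : g (-1) = (4 - 2*εX + 2*εY)/((1+εX)*(1-εY)) := by
    simp only [hg, hs, ht]
    field_simp
    ring
  have hgm1pos : 0 < g (-1) := by
    rw [hgm1]; apply div_pos (by linarith) hab
  clear hs ht hgm1
  clear_value s t
  set M : ℝ := 2 + |s| + |t| with hM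
  have hM2 : (2:ℝ) ≤ M := by
    have := abs_nonneg s; have := abs_nonneg t; simp [hM]; linarith
  have hsle : s ≤ |s| := le_abs_self s
  have hsle' : -|s| ≤ s := neg_abs_le s
  have htle : t ≤ |t| := le_abs_self t
  have htle' : -|t| ≤ t := neg_abs_le t
  have hMpos : (0:ℝ) < M := by linarith
  have hMM : M ≤ M^2 := by nlinarith
  have h2 : -(|s| * M^2) ≤ s * M^2 := by nlinarith [sq_nonneg M]
  have h2' : s * M^2 ≤ |s| * M^2 := by nlinarith [sq_nonneg M]
  have h3 : t * M ≤ |t| * M := by nlinarith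
  have h3' : -(|t| * M) ≤ t * M := by nlinarith
  have h5 : |t| * M ≤ |t| * M^2 := by
    nlinarith [mul_nonneg (abs_nonneg t) (by nlinarith : (0:ℝ) ≤ M^2 - M)]
  have h4 : M^3 - |s| * M^2 - |t| * M^2 = 2 * M^2 := by rw [hM]; ring
  have h6 : (8:ℝ) ≤ 2 * M^2 := by nlinarith
  have hgM : 0 < g M := by
    simp only [hg]
    linarith
  have hgmM : g (-M) < 0 := by
    have : g (-M) = -(M^3) + s * M^2 + t * M - 1 := by simp only [hg]; ring
    rw [this]
    linarith
  -- roots via IVT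
  obtain ⟨l₁, hl₁mem, hl₁⟩ :
      ∃ l₁ ∈ Set.Icc (0:ℝ) M, g l₁ = 0 := by
    have := intermediate_value_Icc (by linarith : (0:ℝ) ≤ M) hgc.continuousOn
    have h0 : (0:ℝ) ∈ Set.Icc (g 0) (g M) := by constructor <;> linarith [hg0]
    obtain ⟨x, hx, hx0⟩ := this h0
    exact ⟨x, hx, hx0⟩
  obtain ⟨l₂, hl₂mem, hl₂⟩ :
      ∃ l₂ ∈ Set.Icc (-1:ℝ) 0, g l₂ = 0 := by
    have := intermediate_value_Icc' (by linarith : (-1:ℝ) ≤ 0) hgc.continuousOn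
    have h0 : (0:ℝ) ∈ Set.Icc (g 0) (g (-1)) := by constructor <;> linarith [hg0]
    obtain ⟨x, hx, hx0⟩ := this h0
    exact ⟨x, hx, hx0⟩
  obtain ⟨l₃, hl₃mem, hl₃⟩ :
      ∃ l₃ ∈ Set.Icc (-M) (-1:ℝ), g l₃ = 0 := by
    have := intermediate_value_Icc (by linarith : (-M:ℝ) ≤ -1) hgc.continuousOn
    have h0 : (0:ℝ) ∈ Set.Icc (g (-M)) (g (-1)) := by constructor <;> linarith
    obtain ⟨x, hx, hx0⟩ := this h0
    exact ⟨x, hx, hx0⟩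
  -- strict inequalities
  have hl₁pos : 0 < l₁ := by
    rcases lt_or_eq_of_le hl₁mem.1 with h | h
    · exact h
    · exfalso; rw [← h] at hl₁; rw [hg0] at hl₁; norm_num at hl₁
  have hl₂gt : -1 < l₂ := by
    rcases lt_or_eq_of_le hl₂mem.1 with h | h
    · exact h
    · exfalso; rw [← h] at hl₂; linarith
  have hl₂lt : l₂ < 0 := by
    rcases lt_or_eq_of_le hl₂mem.2 with h | h
    · exact h
    · exfalso; rw [h] at hl₂; rw [hg0] at hl₂; norm_num at hl₂
  have hl₃lt : l₃ < -1 := by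
    rcases lt_or_eq_of_le hl₃mem.2 with h | h
    · exact h
    · exfalso; rw [h] at hl₃; linarith
  refine ⟨l₁, l₂, l₃, ?_, hl₁pos, hl₂gt, hl₂lt, hl₃lt⟩
  -- factor the characteristic polynomial
  set p := (AC2 εX εY).charpoly with hp
  have hmonic : p.Monic := Matrix.charpoly_monic _
  have hdeg : p.natDegree = 3 := by
    rw [hp, Matrix.charpoly_natDegree_eq_dim]; simp
  have hr₁ : p.IsRoot l₁ := by rw [Polynomial.IsRoot, hp_eval]; exact hl₁
  set q₁ := p /ₘ (X - C l₁) with hq₁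
  have h1 : (X - C l₁) * q₁ = p := Polynomial.mul_divByMonic_eq_iff_isRoot.mpr hr₁
  have hq₁monic : q₁.Monic :=
    Polynomial.Monic.of_mul_monic_left (monic_X_sub_C l₁) (h1.symm ▸ hmonic)
  have hq₁deg : q₁.natDegree = 2 := by
    have := (monic_X_sub_C l₁).natDegree_mul hq₁monic
    rw [h1, hdeg, Polynomial.natDegree_X_sub_C] at this
    omega
  have hr₂ : q₁.IsRoot l₂ := by
    have : Polynomial.eval l₂ p = (l₂ - l₁) * Polynomial.eval l₂ q₁ := by
      rw [← h1]; simp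
    rw [hp_eval, hl₂] at this
    have hne : l₂ - l₁ ≠ 0 := by intro h; nlinarith [sub_eq_zero.mp h]
    exact (mul_eq_zero.mp this.symm).resolve_left hne
  set q₂ := q₁ /ₘ (X - C l₂) with hq₂
  have h2 : (X - C l₂) * q₂ = q₁ := Polynomial.mul_divByMonic_eq_iff_isRoot.mpr hr₂
  have hq₂monic : q₂.Monic :=
    Polynomial.Monic.of_mul_monic_left (monic_X_sub_C l₂) (h2.symm ▸ hq₁monic)
  have hq₂deg : q₂.natDegree = 1 := by
    have := (monic_X_sub_C l₂).natDegree_mul hq₂monic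
    rw [h2, hq₁deg, Polynomial.natDegree_X_sub_C] at this
    omega
  have hr₃ : q₂.IsRoot l₃ := by
    have : Polynomial.eval l₃ p = (l₃ - l₁) * ((l₃ - l₂) * Polynomial.eval l₃ q₂) := by
      rw [← h1, ← h2]; simp
    rw [hp_eval, hl₃] at this
    have hne1 : l₃ - l₁ ≠ 0 := by intro h; nlinarith [sub_eq_zero.mp h]
    have hne2 : l₃ - l₂ ≠ 0 := by intro h; nlinarith [sub_eq_zero.mp h]
    have := (mul_eq_zero.mp this.symm).resolve_left hne1
    exact (mul_eq_zero.mp this).resolve_left hne2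
  have hq₂eq : q₂ = X - C l₃ := by
    have h := hq₂monic.eq_X_add_C hq₂deg
    have hc : q₂.coeff 0 = -l₃ := by
      have := hr₃
      rw [Polynomial.IsRoot, h] at this
      simp at this
      linarith
    rw [h, hc]
    simp [sub_eq_add_neg]
  rw [← h1, ← h2, hq₂eq, ← mul_assoc]
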